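/- Let a, b be nonnegative reals with a + b = 1 and let ψ be the GHZ-class state ψ = √a·|000⟩ + √b·|111⟩. Then the concurrence of assistance of the reduced state of the first two qubits saturates the upper bound 2√(det ρ_A): Tr R(ρ_AB) = 2√(a·b) = 2√(det ρ_A). -/

import Mathlib

open Matrix Complex Kronecker Finset
open scoped ComplexOrder

noncomputable section

abbrev TwoQubitMat := Matrix (Fin 2 × Fin 2) (Fin 2 × Fin 2) ℂ

def sigmaY : Matrix (Fin 2) (Fin 2) ℂ := !![0, -Complex.I; Complex.I, 0]

def spinFlip (ρ : TwoQubitMat) : TwoQubitMat :=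
  (sigmaY ⊗ₖ sigmaY) * ρ.map (starRingEnd ℂ) * (sigmaY ⊗ₖ sigmaY)

def matSqrt {m : Type*} [Fintype m] [DecidableEq m] (M : Matrix m m ℂ) : Matrix m m ℂ :=
  open scoped Classical in
  if h : M.PosSemidef then h.1.eigenvectorUnitary.1 * diagonal ((↑) ∘ (√·) ∘ h.1.eigenvalues) *
    (star h.1.eigenvectorUnitary : Matrix m m ℂ) else 0

def Rmat (ρ : TwoQubitMat) : TwoQubitMat :=
  matSqrt (matSqrt ρ * spinFlip ρ * matSqrt ρ)

def CoA (ρ : TwoQubitMat) : ℝ := (Rmat ρ).trace.re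

def lmin2 (M : Matrix (Fin 2) (Fin 2) ℂ) : ℝ :=
  if h : M.IsHermitian then min (h.eigenvalues 0) (h.eigenvalues 1) else 0

def maxEig4 (M : TwoQubitMat) : ℝ :=
  if h : M.IsHermitian then Finset.univ.sup' Finset.univ_nonempty h.eigenvalues else 0

def Conc (ρ : TwoQubitMat) : ℝ := max 0 (2 * maxEig4 (Rmat ρ) - (Rmat ρ).trace.re)

def eigMultiset (M : TwoQubitMat) : Multiset ℝ :=
  if h : M.IsHermitian then Finset.univ.val.map h.eigenvalues else 0

def rhoAB (ψ : Fin 2 → Fin 2 → Fin 2 → ℂ) : TwoQubitMat :=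
  fun p q => ∑ l, ψ p.1 p.2 l * (starRingEnd ℂ) (ψ q.1 q.2 l)

def rhoAS (ψ : Fin 2 → Fin 2 → Fin 2 → ℂ) : TwoQubitMat :=
  fun p q => ∑ j, ψ p.1 j p.2 * (starRingEnd ℂ) (ψ q.1 j q.2)

def rhoA (ψ : Fin 2 → Fin 2 → Fin 2 → ℂ) : Matrix (Fin 2) (Fin 2) ℂ :=
  fun i i' => ∑ j, ∑ l, ψ i j l * (starRingEnd ℂ) (ψ i' j l)

/-- The GHZ-class state `√a|000⟩ + √b|111⟩`. -/
def psiGHZ (a b : ℝ) : Fin 2 → Fin 2 → Fin 2 → ℂ := fun i j l =>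
  if i = 0 ∧ j = 0 ∧ l = 0 then (Real.sqrt a : ℂ)
  else if i = 1 ∧ j = 1 ∧ l = 1 then (Real.sqrt b : ℂ)
  else 0

/-!
The reduced state of `√a|000⟩ + √b|111⟩` on the first two qubits is diagonal, `diag(a, 0, 0, b)`.
For a diagonal two-qubit state with populations `d`, the spin flip is again diagonal with populations
`d (ī, j̄)`, so all matrices involved commute and `R` is the diagonal matrix with entries
`√(d (i, j) · d (ī, j̄))`. For GHZ these are `√(ab)` at `|00⟩` and `|11⟩` and `0` elsewhere, while
`ρ_A = diag(a, b)` has determinant `ab`.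
-/

open scoped MatrixOrder in
lemma matSqrt_eq_cfcSqrt {m : Type*} [Fintype m] [DecidableEq m] {M : Matrix m m ℂ}
    (hM : M.PosSemidef) : matSqrt M = CFC.sqrt M := by
  rw [matSqrt, dif_pos hM, CFC.sqrt_eq_real_sqrt _ hM.nonneg, cfcₙ_eq_cfc, hM.1.cfc_eq,
    IsHermitian.cfc, Unitary.conjStarAlgAut_apply]
  rfl

open scoped MatrixOrder in
lemma matSqrt_diagonal {m : Type*} [Fintype m] [DecidableEq m] {d : m → ℝ} (hd : ∀ i, 0 ≤ d i) :
    matSqrt (diagonal fun i => (d i : ℂ)) = diagonal fun i => (√(d i) : ℂ) := by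
  have hdiag : (diagonal fun i => (d i : ℂ)).PosSemidef :=
    posSemidef_diagonal_iff.mpr fun i => by exact_mod_cast hd i
  have hsqrt : (diagonal fun i => (√(d i) : ℂ)).PosSemidef :=
    posSemidef_diagonal_iff.mpr fun i => by exact_mod_cast Real.sqrt_nonneg (d i)
  rw [matSqrt_eq_cfcSqrt hdiag]
  refine CFC.sqrt_unique ?_ hsqrt.nonneg
  simp only [diagonal_mul_diagonal, ← Complex.ofReal_mul, Real.mul_self_sqrt (hd _)]

/-- `σy ⊗ σy` sends `|ij⟩` to a phase times `|ī j̄⟩`, and the phases cancel in the sandwich. -/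
lemma spinFlip_diagonal (d : Fin 2 × Fin 2 → ℂ) :
    spinFlip (diagonal d) = diagonal fun p => star (d (p.1.rev, p.2.rev)) := by
  ext ⟨i, j⟩ ⟨k, l⟩
  fin_cases i <;> fin_cases j <;> fin_cases k <;> fin_cases l <;>
    simp [spinFlip, sigmaY, mul_apply, Fintype.sum_prod_type, Fin.sum_univ_two, diagonal]

lemma Rmat_diagonal {d : Fin 2 × Fin 2 → ℝ} (hd : ∀ p, 0 ≤ d p) :
    Rmat (diagonal fun p => (d p : ℂ)) =
      diagonal fun p => (√(d p * d (p.1.rev, p.2.rev)) : ℂ) := by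
  have hprod : ∀ p, 0 ≤ d p * d (p.1.rev, p.2.rev) := fun p => mul_nonneg (hd p) (hd _)
  have hsandwich : matSqrt (diagonal fun p => (d p : ℂ)) * spinFlip (diagonal fun p => (d p : ℂ)) *
      matSqrt (diagonal fun p => (d p : ℂ)) =
      diagonal fun p => ((d p * d (p.1.rev, p.2.rev) : ℝ) : ℂ) := by
    rw [matSqrt_diagonal hd, spinFlip_diagonal, diagonal_mul_diagonal, diagonal_mul_diagonal]
    congr 1
    ext p
    simp only [Complex.star_def, Complex.conj_ofReal, ← Complex.ofReal_mul]
    rw [mul_right_comm, Real.mul_self_sqrt (hd p)]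
  rw [Rmat, hsandwich, matSqrt_diagonal hprod]

lemma CoA_diagonal {d : Fin 2 × Fin 2 → ℝ} (hd : ∀ p, 0 ≤ d p) :
    CoA (diagonal fun p => (d p : ℂ)) = ∑ p, √(d p * d (p.1.rev, p.2.rev)) := by
  rw [CoA, Rmat_diagonal hd, trace_diagonal, ← Complex.ofReal_sum, Complex.ofReal_re]

def ghzWeights (a b : ℝ) (p : Fin 2 × Fin 2) : ℝ :=
  if p = (0, 0) then a else if p = (1, 1) then b else 0

lemma ghzWeights_nonneg {a b : ℝ} (ha : 0 ≤ a) (hb : 0 ≤ b) (p : Fin 2 × Fin 2) :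
    0 ≤ ghzWeights a b p := by
  unfold ghzWeights
  split_ifs <;> first | assumption | rfl

lemma rhoAB_psiGHZ {a b : ℝ} (ha : 0 ≤ a) (hb : 0 ≤ b) :
    rhoAB (psiGHZ a b) = diagonal fun p => (ghzWeights a b p : ℂ) := by
  ext ⟨i, j⟩ ⟨k, l⟩
  fin_cases i <;> fin_cases j <;> fin_cases k <;> fin_cases l <;>
    simp [rhoAB, psiGHZ, ghzWeights, diagonal, ← Complex.ofReal_mul,
      Real.mul_self_sqrt ha, Real.mul_self_sqrt hb]

lemma det_rhoA_psiGHZ {a b : ℝ} (ha : 0 ≤ a) (hb : 0 ≤ b) :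
    (rhoA (psiGHZ a b)).det = ((a * b : ℝ) : ℂ) := by
  rw [det_fin_two]
  simp [rhoA, psiGHZ, Fin.sum_univ_two, ← Complex.ofReal_mul,
    Real.mul_self_sqrt ha, Real.mul_self_sqrt hb]

theorem CoA_of_GHZ_state_general (a b : ℝ) (ha : 0 ≤ a) (hb : 0 ≤ b) :
    CoA (rhoAB (psiGHZ a b)) = 2 * Real.sqrt (a * b) ∧
    2 * Real.sqrt (a * b) = 2 * Real.sqrt (rhoA (psiGHZ a b)).det.re := by
  constructor
  · rw [rhoAB_psiGHZ ha hb, CoA_diagonal (ghzWeights_nonneg ha hb)]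
    simp [Fintype.sum_prod_type, ghzWeights, mul_comm b a, two_mul]
  · rw [det_rhoA_psiGHZ ha hb, Complex.ofReal_re]

theorem CoA_of_GHZ_state (a b : ℝ) (ha : 0 ≤ a) (hb : 0 ≤ b) (hab : a + b = 1) :
    CoA (rhoAB (psiGHZ a b)) = 2 * Real.sqrt (a * b) ∧
    2 * Real.sqrt (a * b) = 2 * Real.sqrt (rhoA (psiGHZ a b)).det.re :=
  CoA_of_GHZ_state_general a b ha hb
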